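/- arXiv:2505.00787 — 3 statements merged into one kernel-verified Lean document; each statement's English description precedes it below -/
import Mathlib

section
/- Let Π = {π₁,...,πₙ} be a finite set of policies in a finite MDP with reward r, each with action-value function q^{πᵢ}. Define the GPI policy π'(s) ∈ argmax_a max_i q^{πᵢ}(s,a). Then for all states s and actions a, q^{π'}(s,a) ≥ max_i q^{πᵢ}(s,a). -/
/-! The pointwise maximum `Q` of the action-value functions is a subsolution of the Bellman
equation of the GPI policy `π'`: for each `π ∈ Π`, `q^π = T^π q^π ≤ T^{π'} Q`, because the
next-state value `q^π(s', π s')` is at most `Q(s', π s') ≤ Q(s', π' s')` by greediness.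
Since `T^{π'}` is a `γ`-contraction in the sup norm, a subsolution lies below the fixed
point `q^{π'}`: the largest excess `M` of `Q - q^{π'}` along `π'` satisfies `M ≤ γ M`. -/

open Finset

section Bellman

variable {S A : Type*} [Fintype S] (p : S → A → S → ℝ) (r : S → A → ℝ) (γ : ℝ)

/-- The Bellman operator `T^π` on action-value functions. -/
def bellmanQ (π : S → A) (f : S → A → ℝ) (s : S) (a : A) : ℝ :=
  r s a + γ * ∑ s', p s a s' * f s' (π s')

variable {p γ}

theorem bellmanQ_le_bellmanQ (hp0 : ∀ s a s', 0 ≤ p s a s') (hγ0 : 0 ≤ γ)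
    {π σ : S → A} {f g : S → A → ℝ} (hfg : ∀ s', f s' (π s') ≤ g s' (σ s')) (s : S) (a : A) :
    bellmanQ p r γ π f s a ≤ bellmanQ p r γ σ g s a := by
  unfold bellmanQ
  gcongr with s' _
  exacts [hp0 s a s', hfg s']

theorem bellmanQ_sub_bellmanQ_le (hp0 : ∀ s a s', 0 ≤ p s a s') (hp1 : ∀ s a, ∑ s', p s a s' = 1)
    (hγ0 : 0 ≤ γ) {π : S → A} {f g : S → A → ℝ} {M : ℝ}
    (hM : ∀ s', f s' (π s') - g s' (π s') ≤ M) (s : S) (a : A) :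
    bellmanQ p r γ π f s a - bellmanQ p r γ π g s a ≤ γ * M := by
  have hsum : ∑ s', p s a s' * (f s' (π s') - g s' (π s')) ≤ M :=
    calc ∑ s', p s a s' * (f s' (π s') - g s' (π s'))
        ≤ ∑ s', p s a s' * M := sum_le_sum fun s' _ => mul_le_mul_of_nonneg_left (hM s') (hp0 s a s')
      _ = M := by rw [← sum_mul, hp1, one_mul]
  calc bellmanQ p r γ π f s a - bellmanQ p r γ π g s a
      = γ * ∑ s', p s a s' * (f s' (π s') - g s' (π s')) := by
        simp only [bellmanQ, mul_sub, sum_sub_distrib, mul_sum]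
        ring
    _ ≤ γ * M := mul_le_mul_of_nonneg_left hsum hγ0

theorem le_of_le_bellmanQ_of_eq_bellmanQ (hp0 : ∀ s a s', 0 ≤ p s a s')
    (hp1 : ∀ s a, ∑ s', p s a s' = 1) (hγ0 : 0 ≤ γ) (hγ1 : γ < 1) {π : S → A}
    {f g : S → A → ℝ} (hf : ∀ s a, f s a ≤ bellmanQ p r γ π f s a)
    (hg : ∀ s a, g s a = bellmanQ p r γ π g s a) (s : S) (a : A) : f s a ≤ g s a := by
  have : Nonempty S := ⟨s⟩
  obtain ⟨s₀, hs₀⟩ := Finite.exists_max fun s' => f s' (π s') - g s' (π s')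
  have hexcess : ∀ t b, f t b - g t b ≤ γ * (f s₀ (π s₀) - g s₀ (π s₀)) := fun t b =>
    calc f t b - g t b ≤ bellmanQ p r γ π f t b - bellmanQ p r γ π g t b := by
          linarith [hf t b, hg t b]
      _ ≤ _ := bellmanQ_sub_bellmanQ_le r hp0 hp1 hγ0 hs₀ t b
  have hM : f s₀ (π s₀) - g s₀ (π s₀) ≤ 0 := by nlinarith [hexcess s₀ (π s₀)]
  nlinarith [hexcess s a]

end Bellman

theorem sup'_le_bellmanQ_of_greedy {S A : Type*} [Fintype S] {p : S → A → S → ℝ}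
    (hp0 : ∀ s a s', 0 ≤ p s a s') (r : S → A → ℝ) {γ : ℝ} (hγ0 : 0 ≤ γ)
    {Pols : Finset (S → A)} (hPols : Pols.Nonempty) {q : (S → A) → S → A → ℝ}
    (hq : ∀ π ∈ Pols, ∀ s a, q π s a = bellmanQ p r γ π (q π) s a) {π' : S → A}
    (hπ' : ∀ s a, (Pols.sup' hPols fun π => q π s a) ≤ Pols.sup' hPols fun π => q π s (π' s))
    (s : S) (a : A) :
    (Pols.sup' hPols fun π => q π s a) ≤
      bellmanQ p r γ π' (fun s a => Pols.sup' hPols fun π => q π s a) s a := by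
  refine sup'_le hPols _ fun π hπ => (hq π hπ s a).trans_le ?_
  refine bellmanQ_le_bellmanQ r hp0 hγ0 (fun s' => ?_) s a
  exact (le_sup' (fun ρ => q ρ s' (π s')) hπ).trans (hπ' s' (π s'))

theorem gpi_policy_improvement_general
    {S A : Type} [Fintype S]
    (p : S → A → S → ℝ)
    (hp0 : ∀ s a s', 0 ≤ p s a s') (hp1 : ∀ s a, ∑ s', p s a s' = 1)
    (r : S → A → ℝ) (γ : ℝ) (hγ0 : 0 ≤ γ) (hγ1 : γ < 1)
    (Pols : Finset (S → A)) (hPols : Pols.Nonempty)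
    (q : (S → A) → S → A → ℝ)
    (hq : ∀ π ∈ Pols, ∀ s a,
      q π s a = r s a + γ * ∑ s', p s a s' * q π s' (π s'))
    (π' : S → A)
    (hπ' : ∀ s a, (Pols.sup' hPols fun π => q π s a) ≤
      Pols.sup' hPols fun π => q π s (π' s))
    (q' : S → A → ℝ)
    (hq' : ∀ s a, q' s a = r s a + γ * ∑ s', p s a s' * q' s' (π' s')) :
    ∀ s a, (Pols.sup' hPols fun π => q π s a) ≤ q' s a :=
  le_of_le_bellmanQ_of_eq_bellmanQ r hp0 hp1 hγ0 hγ1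
    (sup'_le_bellmanQ_of_greedy hp0 r hγ0 hPols hq hπ') hq'

/-- GPI theorem: the GPI policy, greedy w.r.t. the pointwise maximum of the
action-value functions of a finite set of policies, has an action-value
function dominating every base policy's action-value function. -/
theorem gpi_policy_improvement
    {S A : Type} [Fintype S] [Fintype A]
    (p : S → A → S → ℝ)
    (hp0 : ∀ s a s', 0 ≤ p s a s') (hp1 : ∀ s a, ∑ s', p s a s' = 1)
    (r : S → A → ℝ) (γ : ℝ) (hγ0 : 0 ≤ γ) (hγ1 : γ < 1)
    (Pols : Finset (S → A)) (hPols : Pols.Nonempty)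
    (q : (S → A) → S → A → ℝ)
    (hq : ∀ π ∈ Pols, ∀ s a,
      q π s a = r s a + γ * ∑ s', p s a s' * q π s' (π s'))
    (π' : S → A)
    (hπ' : ∀ s a, (Pols.sup' hPols fun π => q π s a) ≤
      Pols.sup' hPols fun π => q π s (π' s))
    (q' : S → A → ℝ)
    (hq' : ∀ s a, q' s a = r s a + γ * ∑ s', p s a s' * q' s' (π' s')) :
    ∀ s a, (Pols.sup' hPols fun π => q π s a) ≤ q' s a :=
  gpi_policy_improvement_general p hp0 hp1 r γ hγ0 hγ1 Pols hPols q hq π' hπ' q' hq'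
end

section
/- Let {πᵢ}ᵢ₌₁ⁿ be policies optimal for tasks {wᵢ} and let w be an arbitrary task in the simplex. Suppose the approximate action-value functions satisfy |q^{πᵢ}_w(s,a) − q̂^{πᵢ}_w(s,a)| ≤ ε for all (s,a) and all i, and let φ_max = max_{s,a} ||φ(s,a)||. Then the GPI policy π^GPI computed from the approximations satisfies q*_w(s,a) − q^{π^GPI}_w(s,a) ≤ (2/(1−γ)) (φ_max · minᵢ ||w − wᵢ|| + ε) for all (s,a). -/
/-!
Pick `j` minimizing `‖w - wⱼ‖` and split
`q*_w - q^GPI_w = (q*_w - q*_{wⱼ}) + (q^{πⱼ}_{wⱼ} - q^{πⱼ}_w) + (q^{πⱼ}_w - q^GPI_w)`.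
The first two terms are value differences caused by a reward perturbation of size at most
`φ_max ‖w - wⱼ‖`, hence at most `φ_max ‖w - wⱼ‖ / (1 - γ)`; the last is the GPI theorem for
`ε`-accurate evaluations, `2ε / (1 - γ)`. All three bounds come from the same contraction
argument: a quantity bounded by `c + γ M` whenever it is bounded by `M` is bounded by
`c / (1 - γ)`.
-/

open scoped RealInnerProductSpace

open Finset

theorem le_div_one_sub_of_forall_le_add_mul {ι : Type*} [Finite ι] {f : ι → ℝ} {c γ : ℝ}
    (hγ : γ < 1) (h : ∀ M, (∀ j, f j ≤ M) → ∀ i, f i ≤ c + γ * M) (i : ι) :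
    f i ≤ c / (1 - γ) := by
  have : Nonempty ι := ⟨i⟩
  have hbdd : BddAbove (Set.range f) := (Set.finite_range f).bddAbove
  have hle : ∀ j, f j ≤ ⨆ j, f j := le_ciSup hbdd
  have hsup : ⨆ j, f j ≤ c + γ * ⨆ j, f j := ciSup_le (h _ hle)
  rw [le_div_iff₀ (by linarith)]
  nlinarith [hle i]

theorem Finset.sup'_le_sup'_add {ι : Type*} {s : Finset ι} (hs : s.Nonempty) {f g : ι → ℝ}
    {c : ℝ} (h : ∀ i ∈ s, f i ≤ g i + c) : s.sup' hs f ≤ s.sup' hs g + c := by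
  rw [sup'_add]
  exact sup'_mono_fun h

theorem Finset.sup'_le_sup'_add_two_mul_of_abs_sub_le {ι : Type*} {s : Finset ι}
    (hs : s.Nonempty) {f f' g g' : ι → ℝ} {ε : ℝ} (hf : ∀ i ∈ s, |f i - f' i| ≤ ε)
    (hg : ∀ i ∈ s, |g i - g' i| ≤ ε) (h : s.sup' hs f' ≤ s.sup' hs g') :
    s.sup' hs f ≤ s.sup' hs g + 2 * ε := by
  have hf' : s.sup' hs f ≤ s.sup' hs f' + ε :=
    sup'_le_sup'_add hs fun i hi => by linarith [(abs_le.mp (hf i hi)).2]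
  have hg' : s.sup' hs g' ≤ s.sup' hs g + ε :=
    sup'_le_sup'_add hs fun i hi => by linarith [(abs_le.mp (hg i hi)).1]
  linarith

theorem inner_sub_inner_le_mul_norm_sub {E : Type*} [NormedAddCommGroup E]
    [InnerProductSpace ℝ E] {x : E} {B : ℝ} (hx : ‖x‖ ≤ B) (v v' : E) :
    ⟪x, v⟫ - ⟪x, v'⟫ ≤ B * ‖v - v'‖ := by
  rw [← inner_sub_right]
  exact (real_inner_le_norm _ _).trans (mul_le_mul_of_nonneg_right hx (norm_nonneg _))

section Stochastic

variable {S : Type*} [Fintype S] {p : S → ℝ}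

theorem sum_mul_le_sum_mul_add (hp0 : ∀ s, 0 ≤ p s) (hp1 : ∑ s, p s = 1) {f g : S → ℝ}
    {c : ℝ} (h : ∀ s, f s ≤ g s + c) : ∑ s, p s * f s ≤ ∑ s, p s * g s + c := calc
  ∑ s, p s * f s ≤ ∑ s, p s * (g s + c) :=
    sum_le_sum fun s _ => mul_le_mul_of_nonneg_left (h s) (hp0 s)
  _ = ∑ s, p s * g s + c := by simp only [mul_add, sum_add_distrib, ← sum_mul, hp1, one_mul]

theorem norm_sum_smul_le {E : Type*} [SeminormedAddCommGroup E] [NormedSpace ℝ E]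
    (hp0 : ∀ s, 0 ≤ p s) (hp1 : ∑ s, p s = 1) {v : S → E} {M : ℝ} (hv : ∀ s, ‖v s‖ ≤ M) :
    ‖∑ s, p s • v s‖ ≤ M := calc
  ‖∑ s, p s • v s‖ ≤ ∑ s, p s * ‖v s‖ := by
    refine (norm_sum_le _ _).trans_eq (sum_congr rfl fun s _ => ?_)
    rw [norm_smul, Real.norm_of_nonneg (hp0 s)]
  _ ≤ ∑ s, p s * M := sum_le_sum fun s _ => mul_le_mul_of_nonneg_left (hv s) (hp0 s)
  _ = M := by rw [← sum_mul, hp1, one_mul]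

end Stochastic

section MDP

variable {S A : Type*} [Fintype S] (p : S → A → S → ℝ) (γ : ℝ)

def IsPolicyValue (r : S → A → ℝ) (π : S → A) (q : S → A → ℝ) : Prop :=
  ∀ s a, q s a = r s a + γ * ∑ s', p s a s' * q s' (π s')

def IsOptimalValue [Fintype A] [Nonempty A] (r q : S → A → ℝ) : Prop :=
  ∀ s a, q s a = r s a + γ * ∑ s', p s a s' * univ.sup' univ_nonempty (q s')

variable {p γ}

theorem isPolicyValue_inner_of_successorFeatures {E : Type*} [NormedAddCommGroup E]
    [InnerProductSpace ℝ E] {φ ψ : S → A → E} {π : S → A}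
    (hψ : ∀ s a, ψ s a = φ s a + γ • ∑ s', p s a s' • ψ s' (π s')) (v : E) :
    IsPolicyValue p γ (fun s a => ⟪φ s a, v⟫) π (fun s a => ⟪ψ s a, v⟫) := by
  intro s a
  simp only [hψ s a, inner_add_left, real_inner_smul_left, sum_inner]

variable (hp0 : ∀ s a s', 0 ≤ p s a s') (hp1 : ∀ s a, ∑ s', p s a s' = 1)
  (hγ0 : 0 ≤ γ) (hγ1 : γ < 1)
include hp0 hp1 hγ0 hγ1

theorem norm_successorFeatures_le [Finite A] {E : Type*} [SeminormedAddCommGroup E]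
    [NormedSpace ℝ E] {φ ψ : S → A → E} {π : S → A}
    (hψ : ∀ s a, ψ s a = φ s a + γ • ∑ s', p s a s' • ψ s' (π s')) {B : ℝ}
    (hφ : ∀ s a, ‖φ s a‖ ≤ B) (s : S) (a : A) : ‖ψ s a‖ ≤ B / (1 - γ) := by
  refine le_div_one_sub_of_forall_le_add_mul (f := fun x : S × A => ‖ψ x.1 x.2‖) hγ1
    (fun M hM x => ?_) (s, a)
  have hnext : ‖∑ s', p x.1 x.2 s' • ψ s' (π s')‖ ≤ M :=
    norm_sum_smul_le (hp0 x.1 x.2) (hp1 x.1 x.2) fun s' => hM (s', π s')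
  calc ‖ψ x.1 x.2‖ ≤ ‖φ x.1 x.2‖ + γ * ‖∑ s', p x.1 x.2 s' • ψ s' (π s')‖ := by
        rw [hψ, ← norm_smul_of_nonneg hγ0]
        exact norm_add_le _ _
    _ ≤ B + γ * M := by gcongr; exact hφ _ _

theorem IsOptimalValue.sub_le [Fintype A] [Nonempty A] {r₁ r₂ q₁ q₂ : S → A → ℝ}
    (h₁ : IsOptimalValue p γ r₁ q₁) (h₂ : IsOptimalValue p γ r₂ q₂) {δ : ℝ}
    (hr : ∀ s a, r₁ s a - r₂ s a ≤ δ) (s : S) (a : A) :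
    q₁ s a - q₂ s a ≤ δ / (1 - γ) := by
  refine le_div_one_sub_of_forall_le_add_mul (f := fun x : S × A => q₁ x.1 x.2 - q₂ x.1 x.2)
    hγ1 (fun M hM x => ?_) (s, a)
  have hnext : ∑ s', p x.1 x.2 s' * univ.sup' univ_nonempty (q₁ s') ≤
      ∑ s', p x.1 x.2 s' * univ.sup' univ_nonempty (q₂ s') + M :=
    sum_mul_le_sum_mul_add (hp0 x.1 x.2) (hp1 x.1 x.2) fun s' =>
      sup'_le_sup'_add _ fun a' _ => by linarith [hM (s', a')]
  have := mul_le_mul_of_nonneg_left hnext hγ0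
  rw [h₁, h₂]
  linarith [hr x.1 x.2]

/-- Generalized policy improvement with approximate evaluations (Theorem 1 of Barreto et al.). -/
theorem IsPolicyValue.sub_le_of_greedy_of_abs_sub_le [Fintype A] {ι : Type*} [Fintype ι]
    [Nonempty ι] {r : S → A → ℝ} {πs : ι → S → A} {Q qhat : ι → S → A → ℝ}
    (hQ : ∀ i, IsPolicyValue p γ r (πs i) (Q i)) {ε : ℝ}
    (hε : ∀ i s a, |Q i s a - qhat i s a| ≤ ε) {πG : S → A}
    (hπG : ∀ s a, (univ.sup' univ_nonempty fun i => qhat i s a) ≤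
      univ.sup' univ_nonempty fun i => qhat i s (πG s))
    {qG : S → A → ℝ} (hqG : IsPolicyValue p γ r πG qG) (i : ι) (s : S) (a : A) :
    Q i s a - qG s a ≤ 2 * ε / (1 - γ) := by
  have hgreedy : ∀ s a, (univ.sup' univ_nonempty fun i => Q i s a) ≤
      (univ.sup' univ_nonempty fun i => Q i s (πG s)) + 2 * ε := fun s a =>
    sup'_le_sup'_add_two_mul_of_abs_sub_le _ (fun i _ => hε i s a) (fun i _ => hε i s (πG s))
      (hπG s a)
  have hgap : (univ.sup' univ_nonempty fun i => Q i s a) - qG s a ≤ 2 * ε / (1 - γ) := by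
    refine le_div_one_sub_of_forall_le_add_mul
      (f := fun x : S × A => (univ.sup' univ_nonempty fun i => Q i x.1 x.2) - qG x.1 x.2)
      hγ1 (fun M hM x => ?_) (s, a)
    obtain ⟨j, -, hj⟩ := exists_mem_eq_sup' univ_nonempty fun j => Q j x.1 x.2
    have hε0 : 0 ≤ ε := (abs_nonneg _).trans (hε j x.1 x.2)
    have hnext : ∑ s', p x.1 x.2 s' * Q j s' (πs j s') ≤
        ∑ s', p x.1 x.2 s' * qG s' (πG s') + (M + 2 * ε) :=
      sum_mul_le_sum_mul_add (hp0 x.1 x.2) (hp1 x.1 x.2) fun s' => by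
        have hj' : Q j s' (πs j s') ≤ univ.sup' univ_nonempty fun i => Q i s' (πs j s') :=
          le_sup' (fun i => Q i s' (πs j s')) (mem_univ j)
        linarith [hgreedy s' (πs j s'), hM (s', πG s')]
    have := mul_le_mul_of_nonneg_left hnext hγ0
    have : γ * ε ≤ ε := mul_le_of_le_one_left hε0 hγ1.le
    rw [hj, hQ j, hqG]
    linarith
  linarith [le_sup' (fun i => Q i s a) (mem_univ i)]

end MDP

theorem gpi_suboptimality_bound_general
    {S A : Type} [Fintype S] [Fintype A] [Nonempty S] [Nonempty A] {d n : ℕ}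
    (p : S → A → S → ℝ)
    (hp0 : ∀ s a s', 0 ≤ p s a s') (hp1 : ∀ s a, ∑ s', p s a s' = 1)
    (γ : ℝ) (hγ0 : 0 ≤ γ) (hγ1 : γ < 1)
    (φ : S → A → EuclideanSpace ℝ (Fin d))
    (ψ : (S → A) → S → A → EuclideanSpace ℝ (Fin d))
    (hψ : ∀ (π : S → A) (s : S) (a : A),
      ψ π s a = φ s a + γ • ∑ s', p s a s' • ψ π s' (π s'))
    (ws : Fin (n + 1) → EuclideanSpace ℝ (Fin d))
    (πs : Fin (n + 1) → S → A)
    (w : EuclideanSpace ℝ (Fin d))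
    (qstar : EuclideanSpace ℝ (Fin d) → S → A → ℝ)
    (hqstar : ∀ v s a, qstar v s a = ⟪φ s a, v⟫ + γ * ∑ s', p s a s' *
      Finset.univ.sup' Finset.univ_nonempty (qstar v s'))
    (hopt : ∀ (i : Fin (n + 1)) (s : S) (a : A),
      ⟪ψ (πs i) s a, ws i⟫ = qstar (ws i) s a)
    (qhat : Fin (n + 1) → S → A → ℝ) (ε : ℝ)
    (hε : ∀ i s a, |⟪ψ (πs i) s a, w⟫ - qhat i s a| ≤ ε)
    (φmax : ℝ)
    (hφmax : φmax = Finset.univ.sup' Finset.univ_nonempty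
      fun sa : S × A => ‖φ sa.1 sa.2‖)
    (πG : S → A)
    (hπG : ∀ s a, (Finset.univ.sup' Finset.univ_nonempty fun i => qhat i s a) ≤
      Finset.univ.sup' Finset.univ_nonempty fun i => qhat i s (πG s))
    (qG : S → A → ℝ)
    (hqG : ∀ s a, qG s a = ⟪φ s a, w⟫ + γ * ∑ s', p s a s' * qG s' (πG s')) :
    ∀ s a, qstar w s a - qG s a ≤ (2 / (1 - γ)) *
      (φmax * (Finset.univ.inf' Finset.univ_nonempty fun i => ‖w - ws i‖) + ε) := by
  intro s a
  obtain ⟨j, -, hj⟩ := exists_mem_eq_inf' univ_nonempty fun i => ‖w - ws i‖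
  rw [hj]
  have hφ : ∀ s a, ‖φ s a‖ ≤ φmax := fun s a =>
    hφmax ▸ le_sup' (fun x : S × A => ‖φ x.1 x.2‖) (mem_univ (s, a))
  have hoptimal : qstar w s a - qstar (ws j) s a ≤ φmax * ‖w - ws j‖ / (1 - γ) :=
    IsOptimalValue.sub_le hp0 hp1 hγ0 hγ1 (hqstar w) (hqstar (ws j))
      (fun s a => inner_sub_inner_le_mul_norm_sub (hφ s a) _ _) s a
  have htransfer : ⟪ψ (πs j) s a, ws j⟫ - ⟪ψ (πs j) s a, w⟫ ≤ φmax * ‖w - ws j‖ / (1 - γ) := by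
    have := inner_sub_inner_le_mul_norm_sub
      (norm_successorFeatures_le hp0 hp1 hγ0 hγ1 (hψ (πs j)) hφ s a) (ws j) w
    rwa [norm_sub_rev, div_mul_eq_mul_div] at this
  have hgpi : ⟪ψ (πs j) s a, w⟫ - qG s a ≤ 2 * ε / (1 - γ) :=
    IsPolicyValue.sub_le_of_greedy_of_abs_sub_le hp0 hp1 hγ0 hγ1
      (fun i => isPolicyValue_inner_of_successorFeatures (hψ (πs i)) w) hε hπG hqG j s a
  rw [hopt] at htransfer
  have h1γ : 0 < 1 - γ := by linarith
  have hsplit : 2 / (1 - γ) * (φmax * ‖w - ws j‖ + ε) =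
      φmax * ‖w - ws j‖ / (1 - γ) + φmax * ‖w - ws j‖ / (1 - γ) + 2 * ε / (1 - γ) := by
    field_simp
    ring
  linarith

/-- Theorem 2 of Barreto et al. (2017): suboptimality bound for the GPI policy
computed from ε-accurate action-value approximations of policies optimal for
tasks wᵢ: q*_w − q^{GPI}_w ≤ (2/(1−γ)) (φ_max · minᵢ ‖w − wᵢ‖ + ε). -/
theorem gpi_suboptimality_bound
    {S A : Type} [Fintype S] [Fintype A] [Nonempty S] [Nonempty A] {d n : ℕ}
    (p : S → A → S → ℝ)
    (hp0 : ∀ s a s', 0 ≤ p s a s') (hp1 : ∀ s a, ∑ s', p s a s' = 1)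
    (γ : ℝ) (hγ0 : 0 ≤ γ) (hγ1 : γ < 1)
    (φ : S → A → EuclideanSpace ℝ (Fin d))
    (ψ : (S → A) → S → A → EuclideanSpace ℝ (Fin d))
    (hψ : ∀ (π : S → A) (s : S) (a : A),
      ψ π s a = φ s a + γ • ∑ s', p s a s' • ψ π s' (π s'))
    (ws : Fin (n + 1) → EuclideanSpace ℝ (Fin d))
    (πs : Fin (n + 1) → S → A)
    (w : EuclideanSpace ℝ (Fin d))
    (hw : (∑ i, w i = 1) ∧ ∀ i, 0 ≤ w i)
    (qstar : EuclideanSpace ℝ (Fin d) → S → A → ℝ)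
    (hqstar : ∀ v s a, qstar v s a = ⟪φ s a, v⟫ + γ * ∑ s', p s a s' *
      Finset.univ.sup' Finset.univ_nonempty (qstar v s'))
    (hopt : ∀ (i : Fin (n + 1)) (s : S) (a : A),
      ⟪ψ (πs i) s a, ws i⟫ = qstar (ws i) s a)
    (qhat : Fin (n + 1) → S → A → ℝ) (ε : ℝ)
    (hε : ∀ i s a, |⟪ψ (πs i) s a, w⟫ - qhat i s a| ≤ ε)
    (φmax : ℝ)
    (hφmax : φmax = Finset.univ.sup' Finset.univ_nonempty
      fun sa : S × A => ‖φ sa.1 sa.2‖)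
    (πG : S → A)
    (hπG : ∀ s a, (Finset.univ.sup' Finset.univ_nonempty fun i => qhat i s a) ≤
      Finset.univ.sup' Finset.univ_nonempty fun i => qhat i s (πG s))
    (qG : S → A → ℝ)
    (hqG : ∀ s a, qG s a = ⟪φ s a, w⟫ + γ * ∑ s', p s a s' * qG s' (πG s')) :
    ∀ s a, qstar w s a - qG s a ≤ (2 / (1 - γ)) *
      (φmax * (Finset.univ.inf' Finset.univ_nonempty fun i => ‖w - ws i‖) + ε) :=
  gpi_suboptimality_bound_general p hp0 hp1 γ hγ0 hγ1 φ ψ hψ ws πs w qstar hqstar hopt qhat ε hε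
    φmax hφmax πG hπG qG hqG
end

section
/- Let Ψ_k be a finite set of SF vectors, each optimal for some task (Ψ_k ⊆ CCS), where CCS = {ψ^π : ∃ w ∈ W such that ψ^π·w ≥ ψ^{π'}·w for all policies π'} and W is the simplex. Suppose that for every vertex w of the polyhedron P = {(w, v) ∈ ℝ^{d+1} : ψ·w ≤ v for all ψ ∈ Ψ_k, Σᵢ wᵢ = 1, wᵢ ≥ 0} (the corner weights of Ψ_k), the set Ψ_k contains an optimal vector: max_{ψ ∈ Ψ_k} ψ·w = v*_w = max over all policies π' of ψ^{π'}·w. Then max_{ψ ∈ Ψ_k} ψ·w = v*_w for every w ∈ W; i.e., Ψ_k already covers all of W. -/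
/-!
Write `f w = max_{ψ ∈ Ψk} ψ ⬝ᵥ w` and `v* w = max_π ψSF π ⬝ᵥ w`. The polyhedron `P` is the part
of the epigraph of `f` over the simplex, and `v* ≤ f` on the simplex says that `P` lies in the
epigraph `C` of `v*`, a closed convex set. Cut `P` at a height `B` above every value of `v*` on
the simplex: the result is compact and convex, and each of its extreme points is either a corner
weight of `P`, hence in `C` by hypothesis, or lies on the top face, hence in `C` by the choice of
`B`. By Krein–Milman the whole truncation, and so all of `P`, lies in `C`. The inequality
`f ≤ v*` holds because every vector of `Ψk` is the SF vector of some policy.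
-/

open Set Filter Topology Matrix

theorem mem_extremePoints_of_mem_extremePoints_inter_le {E : Type*} [AddCommGroup E]
    [Module ℝ E] {P : Set E} (hP : Convex ℝ P) (f : E →ₗ[ℝ] ℝ) {B : ℝ} {x : E}
    (hx : x ∈ (P ∩ {y | f y ≤ B}).extremePoints ℝ) (hfx : f x < B) :
    x ∈ P.extremePoints ℝ := by
  refine ⟨hx.1.1, fun x₁ hx₁ x₂ hx₂ hseg ↦ ?_⟩
  obtain ⟨a, b, ha, hb, hab, hx₁₂⟩ := hseg
  have hnear : ∀ y, ∀ᶠ t in 𝓝 (0 : ℝ), f (x + t • (y - x)) < B := fun y ↦ by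
    have hcont : Continuous fun t : ℝ ↦ f x + t * (f y - f x) := by fun_prop
    simpa using hcont.continuousAt.eventually (gt_mem_nhds (by simpa using hfx))
  -- pulling both ends towards `x` by a factor `t` keeps `x` between them, and small `t` puts
  -- them below level `B`
  obtain ⟨t, ⟨hx₁B, hx₂B⟩, ht₀, ht₁⟩ :=
    ((((hnear x₁).and (hnear x₂)).filter_mono nhdsWithin_le_nhds).and
      (Ioo_mem_nhdsGT zero_lt_one)).exists
  have hmem : ∀ y ∈ P, x + t • (y - x) ∈ P := fun y hy ↦
    hP.add_smul_sub_mem hx.1.1 hy ⟨ht₀.le, ht₁.le⟩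
  have hseg : x ∈ openSegment ℝ (x + t • (x₁ - x)) (x + t • (x₂ - x)) :=
    ⟨a, b, ha, hb, hab, by linear_combination (norm := module) (1 - t) • hab • x + t • hx₁₂⟩
  have h := hx.2 ⟨hmem x₁ hx₁, hx₁B.le⟩ ⟨hmem x₂ hx₂, hx₂B.le⟩ hseg
  simpa [ht₀.ne', sub_eq_zero] using h

theorem subset_of_extremePoints_subset {E : Type*} [AddCommGroup E] [Module ℝ E]
    [TopologicalSpace E] [T2Space E] [IsTopologicalAddGroup E] [ContinuousSMul ℝ E]
    [LocallyConvexSpace ℝ E] {P C : Set E} (hP : Convex ℝ P) (hC : Convex ℝ C)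
    (hCc : IsClosed C) (f : E →ₗ[ℝ] ℝ) {B : ℝ} (hK : IsCompact (P ∩ {x | f x ≤ B}))
    (hext : P.extremePoints ℝ ⊆ C) (htop : ∀ x ∈ P, B ≤ f x → x ∈ C) : P ⊆ C := by
  have hKconv : Convex ℝ (P ∩ {x | f x ≤ B}) := hP.inter (convex_halfSpace_le f.isLinear B)
  have hKext : (P ∩ {x | f x ≤ B}).extremePoints ℝ ⊆ C := fun x hx ↦ by
    rcases lt_or_ge (f x) B with hlt | hge
    · exact hext (mem_extremePoints_of_mem_extremePoints_inter_le hP f hx hlt)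
    · exact htop x hx.1.1 hge
  have hKC : P ∩ {x | f x ≤ B} ⊆ C := by
    rw [← closure_convexHull_extremePoints hK hKconv]
    exact closure_minimal (convexHull_min hKext hC) hCc
  intro x hx
  rcases le_total (f x) B with hle | hge
  exacts [hKC ⟨hx, hle⟩, htop x hx hge]

section

variable {ι : Type*} [Fintype ι]

/-- The epigraph of `w ↦ ⨆ φ ∈ Φ, φ ⬝ᵥ w`; the paper's polyhedron `P` is its part over the
simplex. -/
def epigraphSup (Φ : Set (ι → ℝ)) : Set ((ι → ℝ) × ℝ) := {x | ∀ φ ∈ Φ, φ ⬝ᵥ x.1 ≤ x.2}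

theorem convex_epigraphSup (Φ : Set (ι → ℝ)) : Convex ℝ (epigraphSup Φ) := by
  intro x hx y hy a b ha hb _ φ hφ
  simp only [Prod.fst_add, Prod.snd_add, Prod.smul_fst, Prod.smul_snd, dotProduct_add,
    dotProduct_smul, smul_eq_mul]
  gcongr
  exacts [hx φ hφ, hy φ hφ]

theorem isClosed_epigraphSup (Φ : Set (ι → ℝ)) : IsClosed (epigraphSup Φ) := by
  simp only [epigraphSup, ofPred_forall]
  exact isClosed_biInter fun φ _ ↦ isClosed_le (by fun_prop) continuous_snd

theorem exists_forall_dotProduct_le {Δ Φ : Set (ι → ℝ)} (hΔ : IsCompact Δ) (hΦ : Φ.Finite) :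
    ∃ B, ∀ φ ∈ Φ, ∀ w ∈ Δ, φ ⬝ᵥ w ≤ B := by
  have hbdd : BddAbove (⋃ φ ∈ Φ, (φ ⬝ᵥ ·) '' Δ) :=
    (hΦ.bddAbove_biUnion).2 fun φ _ ↦ hΔ.bddAbove_image (by fun_prop)
  obtain ⟨B, hB⟩ := hbdd
  exact ⟨B, fun φ hφ w hw ↦ hB (mem_biUnion hφ (mem_image_of_mem _ hw))⟩

theorem isCompact_preimage_fst_inter_epigraphSup_inter {Δ Ψ : Set (ι → ℝ)} (hΔ : IsCompact Δ)
    (hΨ : Ψ.Nonempty) (B : ℝ) :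
    IsCompact (Prod.fst ⁻¹' Δ ∩ epigraphSup Ψ ∩ {x | x.2 ≤ B}) := by
  obtain ⟨ψ, hψ⟩ := hΨ
  obtain ⟨m, hm⟩ := hΔ.bddBelow_image (f := (ψ ⬝ᵥ ·)) (by fun_prop)
  refine (hΔ.prod (isCompact_Icc (a := m) (b := B))).of_isClosed_subset ?_ ?_
  · exact ((hΔ.isClosed.preimage continuous_fst).inter (isClosed_epigraphSup Ψ)).inter
      (isClosed_le continuous_snd continuous_const)
  · rintro x ⟨⟨hxΔ, hxΨ⟩, hxB⟩
    exact ⟨hxΔ, (hm (mem_image_of_mem _ hxΔ)).trans (hxΨ ψ hψ), hxB⟩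

theorem preimage_fst_inter_epigraphSup_subset {Δ Ψ Φ : Set (ι → ℝ)} (hΔ : IsCompact Δ)
    (hΔc : Convex ℝ Δ) (hΨ : Ψ.Nonempty) (hΦ : Φ.Finite)
    (hext : (Prod.fst ⁻¹' Δ ∩ epigraphSup Ψ).extremePoints ℝ ⊆ epigraphSup Φ) :
    Prod.fst ⁻¹' Δ ∩ epigraphSup Ψ ⊆ epigraphSup Φ := by
  obtain ⟨B, hB⟩ := exists_forall_dotProduct_le hΔ hΦ
  refine subset_of_extremePoints_subset
    ((hΔc.linear_preimage (LinearMap.fst ℝ _ ℝ)).inter (convex_epigraphSup Ψ))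
    (convex_epigraphSup Φ) (isClosed_epigraphSup Φ) (LinearMap.snd ℝ _ ℝ)
    (isCompact_preimage_fst_inter_epigraphSup_inter hΔ hΨ B) hext ?_
  rintro x ⟨hxΔ, -⟩ hBx φ hφ
  exact (hB φ hφ x.1 hxΔ).trans hBx

end

theorem corner_weights_cover_simplex_general
    {S A : Type} [Fintype S] [Fintype A] [DecidableEq S] [Nonempty A]
    {d : ℕ}
    (ψSF : (S → A) → Fin d → ℝ)
    (Ψk : Finset (Fin d → ℝ)) (hΨne : Ψk.Nonempty)
    (hsub : ∀ ψ ∈ Ψk, ∃ π : S → A, ψSF π = ψ ∧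
      ∃ w : Fin d → ℝ, (∑ i, w i = 1) ∧ (∀ i, 0 ≤ w i) ∧
        ∀ π' : S → A, (∑ i, ψSF π' i * w i) ≤ ∑ i, ψ i * w i)
    (P : Set ((Fin d → ℝ) × ℝ))
    (hP : P = {x | (∀ ψ ∈ Ψk, (∑ i, ψ i * x.1 i) ≤ x.2) ∧
      (∑ i, x.1 i = 1) ∧ ∀ i, 0 ≤ x.1 i})
    (hcorner : ∀ x ∈ Set.extremePoints ℝ P,
      (Ψk.sup' hΨne fun ψ => ∑ i, ψ i * x.1 i) =
        Finset.univ.sup' Finset.univ_nonempty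
          fun π : S → A => ∑ i, ψSF π i * x.1 i) :
    ∀ w : Fin d → ℝ, (∑ i, w i = 1) → (∀ i, 0 ≤ w i) →
      (Ψk.sup' hΨne fun ψ => ∑ i, ψ i * w i) =
        Finset.univ.sup' Finset.univ_nonempty
          fun π : S → A => ∑ i, ψSF π i * w i := by
  subst hP
  have hPeq : {x : (Fin d → ℝ) × ℝ | (∀ ψ ∈ Ψk, (∑ i, ψ i * x.1 i) ≤ x.2) ∧
      (∑ i, x.1 i = 1) ∧ ∀ i, 0 ≤ x.1 i} =
      Prod.fst ⁻¹' stdSimplex ℝ (Fin d) ∩ epigraphSup ↑Ψk := by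
    ext x
    simp only [stdSimplex, epigraphSup, dotProduct, mem_inter_iff, mem_preimage, mem_ofPred_eq,
      Finset.mem_coe]
    tauto
  have hext : (Prod.fst ⁻¹' stdSimplex ℝ (Fin d) ∩ epigraphSup ↑Ψk).extremePoints ℝ ⊆
      epigraphSup (range ψSF) := by
    rintro x hx _ ⟨π, rfl⟩
    rw [← hPeq] at hx
    calc ψSF π ⬝ᵥ x.1 ≤ Finset.univ.sup' Finset.univ_nonempty
          fun π : S → A => ∑ i, ψSF π i * x.1 i :=
          Finset.le_sup' (fun π : S → A => ∑ i, ψSF π i * x.1 i) (Finset.mem_univ π)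
      _ = Ψk.sup' hΨne fun ψ => ∑ i, ψ i * x.1 i := (hcorner x hx).symm
      _ ≤ x.2 := Finset.sup'_le _ _ hx.1.1
  have hcover := preimage_fst_inter_epigraphSup_subset (isCompact_stdSimplex ℝ (Fin d))
    (convex_stdSimplex ℝ (Fin d)) hΨne (finite_range ψSF) hext
  intro w hw₁ hw₀
  apply le_antisymm
  · refine Finset.sup'_le _ _ fun ψ hψ ↦ ?_
    obtain ⟨π, rfl, -⟩ := hsub ψ hψ
    exact Finset.le_sup' (fun π : S → A => ∑ i, ψSF π i * w i) (Finset.mem_univ π)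
  · have hw : (w, Ψk.sup' hΨne fun ψ => ∑ i, ψ i * w i) ∈
        Prod.fst ⁻¹' stdSimplex ℝ (Fin d) ∩ epigraphSup ↑Ψk :=
      ⟨⟨hw₀, hw₁⟩, fun ψ hψ ↦ Finset.le_sup' (fun ψ : Fin d → ℝ => ∑ i, ψ i * w i) hψ⟩
    exact Finset.sup'_le _ _ fun π _ ↦ hcover hw (ψSF π) (mem_range_self π)

/-- Corner-weight lemma: let Ψ_k ⊆ CCS be a finite set of SF vectors. If Ψ_k is
optimal at every corner weight (every vertex, i.e. extreme point, of the
polyhedron P determined by Ψ_k and the simplex constraints), then Ψ_k attains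
the optimal scalarized value v*_w for every w in the simplex. -/
theorem corner_weights_cover_simplex
    {S A : Type} [Fintype S] [Fintype A] [DecidableEq S] [Nonempty S] [Nonempty A]
    {d : ℕ}
    (ψSF : (S → A) → Fin d → ℝ)
    (Ψk : Finset (Fin d → ℝ)) (hΨne : Ψk.Nonempty)
    (hsub : ∀ ψ ∈ Ψk, ∃ π : S → A, ψSF π = ψ ∧
      ∃ w : Fin d → ℝ, (∑ i, w i = 1) ∧ (∀ i, 0 ≤ w i) ∧
        ∀ π' : S → A, (∑ i, ψSF π' i * w i) ≤ ∑ i, ψ i * w i)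
    (P : Set ((Fin d → ℝ) × ℝ))
    (hP : P = {x | (∀ ψ ∈ Ψk, (∑ i, ψ i * x.1 i) ≤ x.2) ∧
      (∑ i, x.1 i = 1) ∧ ∀ i, 0 ≤ x.1 i})
    (hcorner : ∀ x ∈ Set.extremePoints ℝ P,
      (Ψk.sup' hΨne fun ψ => ∑ i, ψ i * x.1 i) =
        Finset.univ.sup' Finset.univ_nonempty
          fun π : S → A => ∑ i, ψSF π i * x.1 i) :
    ∀ w : Fin d → ℝ, (∑ i, w i = 1) → (∀ i, 0 ≤ w i) →
      (Ψk.sup' hΨne fun ψ => ∑ i, ψ i * w i) =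
        Finset.univ.sup' Finset.univ_nonempty
          fun π : S → A => ∑ i, ψSF π i * w i :=
  corner_weights_cover_simplex_general ψSF Ψk hΨne hsub P hP hcorner
end
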